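/- If G is a connected graph of order n ≥ 2 and k ≥ 2, then the distinguishing index of the k-fold join G + G + ⋯ + G (k copies) equals 2, except that D'(K₂ + K₂) = 3. -/

import Mathlib

open SimpleGraph

/-- The join of two graphs: disjoint union plus all edges between the parts. -/
def joinGraph {V W : Type*} (G : SimpleGraph V) (H : SimpleGraph W) : SimpleGraph (V ⊕ W) where
  Adj x y :=
    match x, y with
    | Sum.inl a, Sum.inl b => G.Adj a b
    | Sum.inr a, Sum.inr b => H.Adj a b
    | Sum.inl _, Sum.inr _ => True
    | Sum.inr _, Sum.inl _ => True
  symm := by refine ⟨?_⟩; rintro (a|a) (b|b) h <;> first | exact h.symm | trivial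
  loopless := by refine ⟨?_⟩; rintro (a|a) h <;> exact (SimpleGraph.irrefl _) h

instance joinGraphDecidableAdj {V W : Type*} {G : SimpleGraph V} {H : SimpleGraph W}
    [DecidableRel G.Adj] [DecidableRel H.Adj] : DecidableRel (joinGraph G H).Adj
  | Sum.inl a, Sum.inl b => inferInstanceAs (Decidable (G.Adj a b))
  | Sum.inr a, Sum.inr b => inferInstanceAs (Decidable (H.Adj a b))
  | Sum.inl _, Sum.inr _ => Decidable.isTrue trivial
  | Sum.inr _, Sum.inl _ => Decidable.isTrue trivial

/-- The distinguishing number: least `d` admitting a vertex `d`-labeling preserved only by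
the identity automorphism. -/
noncomputable def distinguishingNumber {V : Type*} (G : SimpleGraph V) : ℕ :=
  sInf {d : ℕ | ∃ c : V → Fin d, ∀ f : G ≃g G, (∀ v, c (f v) = c v) → ∀ v, f v = v}

/-- The distinguishing index: least `d` admitting an edge `d`-labeling preserved only by
the identity automorphism. -/
noncomputable def distinguishingIndex {V : Type*} (G : SimpleGraph V) : ℕ :=
  sInf {d : ℕ | ∃ c : Sym2 V → Fin d, ∀ f : G ≃g G,
    (∀ e ∈ G.edgeSet, c (Sym2.map (⇑f) e) = c e) → ∀ v, f v = v}

/-- The non-neighborhood of a vertex. -/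
def nonNbhd {V : Type*} (G : SimpleGraph V) (v : V) : Set V := {u | ¬ G.Adj v u}

/-- The k-fold join of a graph with itself. -/
def kJoin {V : Type*} (G : SimpleGraph V) (k : ℕ) : SimpleGraph (Fin k × V) where
  Adj x y := x.1 ≠ y.1 ∨ (x.1 = y.1 ∧ G.Adj x.2 y.2)
  symm := by
    refine ⟨?_⟩
    rintro x y (h | ⟨h1, h2⟩)
    · exact Or.inl h.symm
    · exact Or.inr ⟨h1.symm, h2.symm⟩
  loopless := by
    refine ⟨?_⟩
    rintro x (h | ⟨h1, h2⟩)
    · exact h rfl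
    · exact (SimpleGraph.irrefl _) h2

/-- `n` disjoint copies of `K₂`. -/
def nK2 (n : ℕ) : SimpleGraph (Fin n × Fin 2) where
  Adj x y := x.1 = y.1 ∧ x.2 ≠ y.2
  symm := by refine ⟨?_⟩; rintro x y ⟨h1, h2⟩; exact ⟨h1.symm, h2.symm⟩
  loopless := by refine ⟨?_⟩; rintro x ⟨h1, h2⟩; exact h2 rfl

/-- The friendship graph `Fₙ`: the join of `K₁` with `n` copies of `K₂`. -/
def friendshipGraph (n : ℕ) : SimpleGraph (Fin 1 ⊕ (Fin n × Fin 2)) :=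
  joinGraph (⊤ : SimpleGraph (Fin 1)) (nK2 n)

/-- A graph has a Hamiltonian path. -/
def HasHamiltonianPath {V : Type*} [DecidableEq V] (G : SimpleGraph V) : Prop :=
  ∃ (u v : V) (p : G.Walk u v), p.IsHamiltonian

/-!
An edge 2-colouring whose first colour class is an asymmetric spanning subgraph `R` is
distinguishing, because a colour-preserving automorphism is an automorphism of `R`. The path
`0 - 1 - ⋯ - (N-1)` with the chord `{1, 3}` is asymmetric once `N ≥ 6`. Send position `p` to
vertex `p / k` of copy `p % k` of the `k`-fold join, for an enumeration of `V` whose first two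
vertices are adjacent in `G`. Consecutive positions then lie in different copies, and so do
positions `1` and `3` unless `k = 2`, in which case they are the first two vertices of one copy.
Hence the chorded path is a spanning subgraph as soon as `kn ≥ 6`. One colour never suffices
since copies can be permuted, and the remaining case `K₂ + K₂ = K₄` is a finite check.
-/

section

variable {V W : Type*}

def IsDistinguishingEdgeColoring {α : Type*} (G : SimpleGraph V) (c : Sym2 V → α) : Prop :=
  ∀ f : G ≃g G, (∀ e ∈ G.edgeSet, c (Sym2.map f e) = c e) → ∀ v, f v = v

def IsAsymmetric (G : SimpleGraph V) : Prop :=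
  ∀ f : G ≃g G, ∀ v, f v = v

section Distinguishing

variable {α β : Type*} {G : SimpleGraph V} {H : SimpleGraph W}

theorem IsDistinguishingEdgeColoring.comp_injective {c : Sym2 V → α} {g : α → β}
    (hg : g.Injective) (hc : IsDistinguishingEdgeColoring G c) :
    IsDistinguishingEdgeColoring G (g ∘ c) :=
  fun f hf => hc f fun e he => hg (hf e he)

theorem IsDistinguishingEdgeColoring.of_iso {c : Sym2 V → α} (φ : G ≃g H)
    (hc : IsDistinguishingEdgeColoring G c) :
    IsDistinguishingEdgeColoring H (c ∘ Sym2.map φ.symm) := by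
  intro f hf w
  have key := hc ((φ.trans f).trans φ.symm) (fun e he => ?_) (φ.symm w)
  · simpa using key
  · simpa [Sym2.map_map, Function.comp_def] using hf (e.map φ) (φ.map_mem_edgeSet_iff.mpr he)

theorem exists_distinguishing_fin_mono {a b : ℕ} (hab : a ≤ b)
    (h : ∃ c : Sym2 V → Fin a, IsDistinguishingEdgeColoring G c) :
    ∃ c : Sym2 V → Fin b, IsDistinguishingEdgeColoring G c :=
  let ⟨_, hc⟩ := h
  ⟨_, hc.comp_injective (Fin.castLE_injective hab)⟩

theorem distinguishingIndex_eq_succ {d : ℕ}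
    (h : ∃ c : Sym2 V → Fin (d + 1), IsDistinguishingEdgeColoring G c)
    (h' : ¬∃ c : Sym2 V → Fin d, IsDistinguishingEdgeColoring G c) :
    distinguishingIndex G = d + 1 := by
  refine le_antisymm (Nat.sInf_le h) (le_csInf ⟨_, h⟩ fun b hb => ?_)
  by_contra! hlt
  exact h' (exists_distinguishing_fin_mono (Nat.lt_succ_iff.mp hlt) hb)

theorem distinguishingIndex_congr (φ : G ≃g H) :
    distinguishingIndex G = distinguishingIndex H := by
  show sInf {d | ∃ c : Sym2 V → Fin d, IsDistinguishingEdgeColoring G c} =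
    sInf {d | ∃ c : Sym2 W → Fin d, IsDistinguishingEdgeColoring H c}
  congr 1
  ext d
  exact ⟨fun ⟨_, hc⟩ => ⟨_, hc.of_iso φ⟩,
    fun ⟨_, hc⟩ => ⟨_, hc.of_iso φ.symm⟩⟩

theorem not_exists_distinguishing_fin_one (f : G ≃g G) {v : V} (hv : f v ≠ v) :
    ¬∃ c : Sym2 V → Fin 1, IsDistinguishingEdgeColoring G c :=
  fun ⟨_, hc⟩ => hv (hc f (fun _ _ => Subsingleton.elim _ _) v)

theorem IsAsymmetric.of_iso (φ : G ≃g H) (hG : IsAsymmetric G) : IsAsymmetric H := by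
  intro f w
  simpa using hG ((φ.trans f).trans φ.symm) (φ.symm w)

theorem IsAsymmetric.exists_distinguishing_two {R : SimpleGraph V} (hR : IsAsymmetric R)
    (hRG : R ≤ G) : ∃ c : Sym2 V → Fin 2, IsDistinguishingEdgeColoring G c := by
  classical
  refine ⟨fun e => if e ∈ R.edgeSet then 0 else 1, fun f hf => hR ⟨f.toEquiv, ?_⟩⟩
  intro x y
  have hcol : G.Adj x y → (R.Adj (f x) (f y) ↔ R.Adj x y) := fun hxy => by
    have := hf s(x, y) hxy
    simp only [Sym2.map_mk, mem_edgeSet] at this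
    split_ifs at this <;> simp_all
  exact ⟨fun h => (hcol (f.map_adj_iff.mp (hRG h))).mp h, fun h => (hcol (hRG h)).mpr h⟩

end Distinguishing

namespace SimpleGraph.Iso

variable {G : SimpleGraph V} {H : SimpleGraph W} (f : G ≃g H) {x a b c : V}

theorem exists_adj_ne (hab : a ≠ b) (ha : G.Adj x a) (hb : G.Adj x b) (s : W) :
    ∃ w, H.Adj (f x) w ∧ w ≠ s := by
  by_contra! h
  exact hab (f.injective ((h _ (f.map_adj_iff.2 ha)).trans (h _ (f.map_adj_iff.2 hb)).symm))

theorem exists_adj_ne_ne (hab : a ≠ b) (hac : a ≠ c) (hbc : b ≠ c) (ha : G.Adj x a)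
    (hb : G.Adj x b) (hc : G.Adj x c) (s t : W) : ∃ w, H.Adj (f x) w ∧ w ≠ s ∧ w ≠ t := by
  by_contra! h
  have hst : ∀ y, G.Adj x y → f y = s ∨ f y = t :=
    fun y hy => or_iff_not_imp_left.2 (h _ (f.map_adj_iff.2 hy))
  have := f.injective.ne hab
  have := f.injective.ne hac
  have := f.injective.ne hbc
  rcases hst a ha with h1 | h1 <;> rcases hst b hb with h2 | h2 <;>
    rcases hst c hc with h3 | h3 <;> simp_all

end SimpleGraph.Iso

def chordedPath (N m : ℕ) : SimpleGraph (Fin N) :=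
  pathGraph N ⊔ fromRel fun a b => a.val = 1 ∧ b.val = m

theorem chordedPath_adj {N m : ℕ} (hm : m ≠ 1) {a b : Fin N} :
    (chordedPath N m).Adj a b ↔
      a.val + 1 = b.val ∨ b.val + 1 = a.val ∨
        a.val = 1 ∧ b.val = m ∨ a.val = m ∧ b.val = 1 := by
  simp only [chordedPath, sup_adj, pathGraph_adj, fromRel_adj, ne_eq, Fin.ext_iff]
  omega

theorem chordedPath_iso_apply_zero {N m : ℕ} (hm : 3 ≤ m) (hmN : m + 3 ≤ N)
    (f : chordedPath N m ≃g chordedPath N m) : f ⟨0, by omega⟩ = ⟨0, by omega⟩ := by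
  have hadj {a b : Fin N} := chordedPath_adj (N := N) (a := a) (b := b) (by omega : m ≠ 1)
  set u := f ⟨0, by omega⟩
  have hend : u.val = 0 ∨ u.val = N - 1 := by
    by_contra! hmid
    obtain ⟨w, hw, hw1⟩ := f.symm.exists_adj_ne (x := u) (a := ⟨u.val - 1, by omega⟩)
      (b := ⟨u.val + 1, by omega⟩) (by simp [Fin.ext_iff]) (hadj.2 (by simp; omega))
      (hadj.2 (by simp)) ⟨1, by omega⟩
    rw [RelIso.symm_apply_apply, hadj] at hw
    simp [Fin.ext_iff] at hw hw1
    omega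
  refine Fin.ext (hend.resolve_right fun hlast => ?_)
  have h01 : (chordedPath N m).Adj ⟨0, by omega⟩ ⟨1, by omega⟩ := hadj.2 (by simp)
  have h1 : (f ⟨1, by omega⟩).val = N - 2 := by
    have := hadj.1 (f.map_adj_iff.2 h01)
    have := (f ⟨1, by omega⟩).isLt
    omega
  obtain ⟨w, hw, hw1, hw2⟩ := f.exists_adj_ne_ne (x := ⟨1, by omega⟩)
    (a := ⟨0, by omega⟩) (b := ⟨2, by omega⟩) (c := ⟨m, by omega⟩) (by simp)
    (by simp [Fin.ext_iff]; omega) (by simp [Fin.ext_iff]; omega)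
    (hadj.2 (by simp)) (hadj.2 (by simp)) (hadj.2 (by simp))
    ⟨N - 3, by omega⟩ ⟨N - 1, by omega⟩
  rw [hadj] at hw
  simp [Fin.ext_iff] at hw1 hw2
  have := w.isLt
  omega

theorem isAsymmetric_chordedPath {N m : ℕ} (hm : 3 ≤ m) (hmN : m + 3 ≤ N) :
    IsAsymmetric (chordedPath N m) := by
  intro f
  have hadj {a b : Fin N} := chordedPath_adj (N := N) (a := a) (b := b) (by omega : m ≠ 1)
  suffices h : ∀ j (hj : j < N), f ⟨j, hj⟩ = ⟨j, hj⟩ from fun v => h v.val v.isLt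
  intro j
  induction j using Nat.strong_induction_on with
  | _ j ih =>
  intro hj
  rcases Nat.eq_zero_or_pos j with rfl | hpos
  · exact chordedPath_iso_apply_zero hm hmN f
  have hprev : (chordedPath N m).Adj (f ⟨j - 1, by omega⟩) (f ⟨j, hj⟩) :=
    f.map_adj_iff.2 (hadj.2 (by simp; omega))
  rw [ih (j - 1) (by omega), hadj] at hprev
  have hge : j ≤ (f ⟨j, hj⟩).val := by
    by_contra! hlt
    have := congrArg Fin.val (f.injective ((ih _ hlt (f ⟨j, hj⟩).isLt).trans rfl :
      f ⟨(f ⟨j, hj⟩).val, _⟩ = f ⟨j, hj⟩))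
    simp at this
    omega
  refine Fin.ext (by_contra fun hne => ?_)
  have h2 : j = 2 ∧ (f ⟨j, hj⟩).val = m := by simp at hprev hne; omega
  obtain ⟨w, hw, hw1, hw3⟩ := f.symm.exists_adj_ne_ne (x := f ⟨j, hj⟩)
    (a := ⟨m - 1, by omega⟩) (b := ⟨m + 1, by omega⟩) (c := ⟨1, by omega⟩)
    (by simp [Fin.ext_iff]) (by simp [Fin.ext_iff]; omega) (by simp [Fin.ext_iff]; omega)
    (hadj.2 (by simp; omega)) (hadj.2 (by simp; omega)) (hadj.2 (by simp; omega))
    ⟨1, by omega⟩ ⟨3, by omega⟩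
  rw [RelIso.symm_apply_apply, hadj] at hw
  simp [Fin.ext_iff] at hw hw1 hw3
  omega

section KJoin

variable {G : SimpleGraph V} {k : ℕ}

theorem kJoin_adj {x y : Fin k × V} :
    (kJoin G k).Adj x y ↔ x.1 ≠ y.1 ∨ x.1 = y.1 ∧ G.Adj x.2 y.2 :=
  Iff.rfl

variable (G) in
def kJoin.permCopies (σ : Equiv.Perm (Fin k)) : kJoin G k ≃g kJoin G k where
  toEquiv := σ.prodCongr (Equiv.refl V)
  map_rel_iff' := by simp [kJoin_adj]

theorem kJoin_top : kJoin (⊤ : SimpleGraph V) k = ⊤ := by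
  ext x y
  simp only [kJoin_adj, top_adj, ne_eq, Prod.ext_iff]
  tauto

def kJoinEnum {n : ℕ} (k : ℕ) (e : V ≃ Fin n) : Fin (n * k) ≃ Fin k × V :=
  finProdFinEquiv.symm.trans ((Equiv.prodComm _ _).trans ((Equiv.refl _).prodCongr e.symm))

theorem kJoinEnum_apply {n : ℕ} (e : V ≃ Fin n) (p : Fin (n * k)) :
    kJoinEnum k e p = (p.modNat, e.symm p.divNat) :=
  rfl

theorem exists_equiv_fin_val_eq_zero_one [Fintype V] {u v : V} (huv : u ≠ v) :
    ∃ e : V ≃ Fin (Fintype.card V), (e u).val = 0 ∧ (e v).val = 1 := by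
  have h2 : 1 < Fintype.card V := Fintype.one_lt_card_iff.2 ⟨u, v, huv⟩
  set e₀ := Fintype.equivFin V
  set z₀ : Fin (Fintype.card V) := ⟨0, by omega⟩
  set z₁ : Fin (Fintype.card V) := ⟨1, h2⟩
  set σ := Equiv.swap (e₀ u) z₀
  have hσv : σ (e₀ v) ≠ z₀ := by
    rw [← Equiv.swap_apply_left (e₀ u) z₀]
    exact σ.injective.ne (e₀.injective.ne huv.symm)
  refine ⟨e₀.trans (σ.trans (Equiv.swap (σ (e₀ v)) z₁)), ?_, ?_⟩
  · simp only [Equiv.trans_apply, σ, Equiv.swap_apply_left]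
    rw [Equiv.swap_apply_of_ne_of_ne hσv.symm (by simp [z₀, z₁, Fin.ext_iff])]
  · simp [Equiv.swap_apply_left, z₁]

theorem chordedPath_le_comap_kJoin {n : ℕ} (hk : 2 ≤ k) {e : V ≃ Fin n} {u v : V}
    (hu : (e u).val = 0) (hv : (e v).val = 1) (huv : G.Adj u v) :
    chordedPath (n * k) 3 ≤ (kJoin G k).comap (kJoinEnum k e) := by
  have step : ∀ p q : Fin (n * k), p.val + 1 = q.val →
      (kJoin G k).Adj (kJoinEnum k e p) (kJoinEnum k e q) := by
    intro p q hpq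
    refine Or.inl fun h => ?_
    have h' : p.val % k = (p.val + 1) % k := by rw [hpq]; exact congrArg Fin.val h
    have := Nat.le_of_dvd one_pos (by simpa using (Nat.modEq_iff_dvd' (Nat.le_succ _)).1 h')
    omega
  have chord : ∀ p q : Fin (n * k), p.val = 1 → q.val = 3 →
      (kJoin G k).Adj (kJoinEnum k e p) (kJoinEnum k e q) := by
    intro p q hp hq
    rw [kJoinEnum_apply, kJoinEnum_apply, kJoin_adj]
    rcases eq_or_ne k 2 with rfl | hk2
    · refine Or.inr ⟨Fin.ext (by simp [hp, hq]), ?_⟩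
      convert huv <;> rw [Equiv.symm_apply_eq] <;> ext <;> simp [hp, hq, hu, hv]
    · refine Or.inl fun h => ?_
      have h' : 1 % k = 3 % k := by simpa [hp, hq] using congrArg Fin.val h
      have := Nat.le_of_dvd (by norm_num) ((Nat.modEq_iff_dvd' (by norm_num)).1 h')
      omega
  intro p q hpq
  rw [chordedPath_adj (by norm_num)] at hpq
  rcases hpq with h | h | ⟨hp, hq⟩ | ⟨hp, hq⟩
  · exact step p q h
  · exact (step q p h).symm
  · exact chord p q hp hq
  · exact (chord q p hq hp).symm

theorem exists_distinguishing_two_kJoin [Fintype V] (hk : 2 ≤ k)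
    (h6 : 6 ≤ Fintype.card V * k) {u v : V} (huv : G.Adj u v) :
    ∃ c : Sym2 (Fin k × V) → Fin 2, IsDistinguishingEdgeColoring (kJoin G k) c := by
  obtain ⟨e, hu, hv⟩ := exists_equiv_fin_val_eq_zero_one (G.ne_of_adj huv)
  refine ((isAsymmetric_chordedPath le_rfl h6).of_iso
    (Iso.map (kJoinEnum k e) _)).exists_distinguishing_two ?_
  exact (map_le_iff_le_comap (kJoinEnum k e).toEmbedding _ _).2
    (chordedPath_le_comap_kJoin hk hu hv huv)

end KJoin

section CompleteGraphFour

def k4Edges : Fin 6 → Sym2 (Fin 4) :=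
  ![s(0, 1), s(0, 2), s(0, 3), s(1, 2), s(1, 3), s(2, 3)]

def k4Coloring (e : Sym2 (Fin 4)) : Fin 3 :=
  if e = s(1, 3) then 1 else if e = s(2, 3) then 2 else 0

theorem exists_k4Edges_eq : ∀ a b : Fin 4, a ≠ b → ∃ i, k4Edges i = s(a, b) := by
  decide

theorem k4Edges_not_isDiag : ∀ i, ¬(k4Edges i).IsDiag := by
  decide

theorem eq_one_of_preserves_k4Coloring : ∀ σ : Equiv.Perm (Fin 4),
    (∀ i, k4Coloring ((k4Edges i).map σ) = k4Coloring (k4Edges i)) → σ = 1 := by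
  decide

theorem exists_perm_ne_one_preserving_k4Edges :
    ∀ x : Fin 6 → Fin 2, ∃ σ : Equiv.Perm (Fin 4),
      σ ≠ 1 ∧ ∀ i j, k4Edges j = (k4Edges i).map σ → x j = x i := by
  decide

theorem isDistinguishingEdgeColoring_k4Coloring :
    IsDistinguishingEdgeColoring (⊤ : SimpleGraph (Fin 4)) k4Coloring := by
  intro f hf v
  have := eq_one_of_preserves_k4Coloring f.toEquiv fun i =>
    hf _ (by simpa [edgeSet_top] using k4Edges_not_isDiag i)
  exact congrArg (· v) this

theorem not_exists_distinguishing_two_top_fin_four :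
    ¬∃ c : Sym2 (Fin 4) → Fin 2,
      IsDistinguishingEdgeColoring (⊤ : SimpleGraph (Fin 4)) c := by
  rintro ⟨c, hc⟩
  obtain ⟨σ, hσ, hpres⟩ := exists_perm_ne_one_preserving_k4Edges (c ∘ k4Edges)
  refine hσ (Equiv.ext fun v => hc (Iso.completeGraph σ) (fun e he => ?_) v)
  induction e using Sym2.ind with
  | _ a b =>
  obtain ⟨i, hi⟩ := exists_k4Edges_eq a b (by simpa using he)
  obtain ⟨j, hj⟩ := exists_k4Edges_eq (σ a) (σ b) (σ.injective.ne (by simpa using he))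
  change c s(σ a, σ b) = c s(a, b)
  rw [← hi, ← hj]
  exact hpres i j (by rw [hi, hj]; rfl)

theorem distinguishingIndex_top_fin_four : distinguishingIndex (⊤ : SimpleGraph (Fin 4)) = 3 :=
  distinguishingIndex_eq_succ ⟨_, isDistinguishingEdgeColoring_k4Coloring⟩
    not_exists_distinguishing_two_top_fin_four

end CompleteGraphFour

theorem SimpleGraph.Connected.eq_top_of_card_eq_two [Fintype V] {G : SimpleGraph V}
    (hG : G.Connected) (h2 : Fintype.card V = 2) : G = ⊤ := by
  classical
  have : Nontrivial V := Fintype.one_lt_card_iff_nontrivial.1 (by omega)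
  ext u w
  refine ⟨G.ne_of_adj, fun huw => ?_⟩
  obtain ⟨x, hx⟩ := hG.preconnected.exists_adj_of_nontrivial u
  convert hx
  by_contra hwx
  have := Finset.card_le_univ ({u, w, x} : Finset V)
  rw [Finset.card_insert_of_notMem (by simp [huw.ne, G.ne_of_adj hx]),
    Finset.card_pair hwx] at this
  omega

theorem distinguishingIndex_kJoin_two_of_card_eq_two [Fintype V] {G : SimpleGraph V}
    (hG : G.Connected) (h2 : Fintype.card V = 2) : distinguishingIndex (kJoin G 2) = 3 := by
  rw [hG.eq_top_of_card_eq_two h2, kJoin_top, ← distinguishingIndex_top_fin_four]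
  exact distinguishingIndex_congr (Iso.completeGraph (Fintype.equivFinOfCardEq (by simp [h2])))

end

theorem distinguishingIndex_kJoin {V : Type*} [Fintype V] (G : SimpleGraph V) (k : ℕ)
    (hG : G.Connected) (hn : 2 ≤ Fintype.card V) (hk : 2 ≤ k) :
    (¬(k = 2 ∧ Fintype.card V = 2) → distinguishingIndex (kJoin G k) = 2) ∧
    ((k = 2 ∧ Fintype.card V = 2) → distinguishingIndex (kJoin G k) = 3) := by
  refine ⟨fun hne => ?_, fun ⟨hk2, h2⟩ =>
    hk2 ▸ distinguishingIndex_kJoin_two_of_card_eq_two hG h2⟩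
  have : Nontrivial V := Fintype.one_lt_card_iff_nontrivial.1 hn
  obtain ⟨u⟩ := (inferInstance : Nonempty V)
  obtain ⟨v, huv⟩ := hG.preconnected.exists_adj_of_nontrivial u
  have h6 : 6 ≤ Fintype.card V * k := by
    rcases eq_or_ne k 2 with rfl | hk2
    · omega
    · nlinarith [show 3 ≤ k by omega]
  have hmove : kJoin.permCopies G (Equiv.swap ⟨0, by omega⟩ ⟨1, hk⟩)
      (⟨0, by omega⟩, u) ≠ (⟨0, by omega⟩, u) := by
    simp [kJoin.permCopies, Equiv.swap_apply_left]
  exact distinguishingIndex_eq_succ (exists_distinguishing_two_kJoin hk h6 huv)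
    (not_exists_distinguishing_fin_one _ hmove)
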